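/- For the Hénon map f(x,y) = (x² + c − ay, x), the limit G⁺(x,y) = lim 2^{-n} log⁺‖f^n(x,y)‖ exists for every (x,y) ∈ ℂ² with ‖(x,y)‖ sufficiently large (specifically when |x| ≥ R with R large depending on |a|, |c|, and |x| ≥ |y|), and in that region G⁺(x,y) = log|x| + o(1) as |x| → ∞. -/

import Mathlib

/-- The complex Hénon map `f(x,y) = (x² + c - a y, x)`. -/
def henon (a c : ℂ) : ℂ × ℂ → ℂ × ℂ := fun p => (p.1 ^ 2 + c - a * p.2, p.1)

/-!
On `V⁺ = {(x,y) : |x| ≥ max(|y|, 2(|a|+|c|)+2)}` the Hénon map satisfies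
`x' = x² + O(|x|)` and keeps `V⁺` invariant, so `log|x'| = 2 log|x| + O(1/|x|)`.
Hence `log|xₙ|/2ⁿ` moves by at most `(|a|+|c|)/(|x| 2ⁿ)` per step: it is Cauchy, and its limit
differs from `log|x|` by at most `2(|a|+|c|)/|x|`. On `V⁺` the sup norm of `fⁿ(x,y)` is `|xₙ| ≥ 1`,
so this sequence is the one in `G⁺`.
-/

open Real Filter Topology Set

lemma Real.abs_log_le_two_mul_abs_sub_one {u : ℝ} (hu : |u - 1| ≤ 1 / 2) :
    |log u| ≤ 2 * |u - 1| := by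
  have hu₀ : 1 / 2 ≤ u := by linarith [(abs_le.mp hu).1]
  have hpos : 0 < u := by linarith
  refine abs_le.mpr ⟨?_, ?_⟩
  · have hinv : |(u - 1) * u⁻¹| ≤ 2 * |u - 1| := by
      rw [abs_mul, abs_inv, abs_of_pos hpos, mul_comm 2]
      gcongr
      rw [inv_le_comm₀ hpos two_pos]
      linarith
    calc -(2 * |u - 1|) ≤ (u - 1) * u⁻¹ := by linarith [neg_abs_le ((u - 1) * u⁻¹)]
      _ = 1 - u⁻¹ := by field_simp
      _ ≤ log u := one_sub_inv_le_log_of_pos hpos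
  · linarith [log_le_sub_one_of_pos hpos, le_abs_self (u - 1), abs_nonneg (u - 1)]

lemma Real.abs_log_sub_two_mul_log_le {s t A : ℝ} (ht : 0 < t) (hA : 2 * A ≤ t)
    (hs : |s - t ^ 2| ≤ A * t) : |log s - 2 * log t| ≤ 2 * A / t := by
  have ht₂ : 0 < t ^ 2 := by positivity
  have hs₀ : 0 < s := by nlinarith [(abs_le.mp hs).1]
  have hu : |s / t ^ 2 - 1| ≤ A / t := by
    rw [div_sub_one ht₂.ne', abs_div, abs_of_pos ht₂, div_le_div_iff₀ ht₂ ht]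
    nlinarith
  have hlog : log s - 2 * log t = log (s / t ^ 2) := by
    rw [log_div hs₀.ne' ht₂.ne', log_pow]
    push_cast
    ring
  rw [hlog]
  calc |log (s / t ^ 2)| ≤ 2 * |s / t ^ 2 - 1| :=
        abs_log_le_two_mul_abs_sub_one (hu.trans (by rw [div_le_iff₀ ht]; linarith))
    _ ≤ 2 * (A / t) := by gcongr
    _ = 2 * A / t := by ring

section Henon

variable {a c : ℂ}

def henonEscapeRegion (a c : ℂ) : Set (ℂ × ℂ) :=
  {p | 2 * (‖a‖ + ‖c‖) + 2 ≤ ‖p.1‖ ∧ ‖p.2‖ ≤ ‖p.1‖}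

lemma norm_henon_fst_sub_sq_le {p : ℂ × ℂ} (h₁ : 1 ≤ ‖p.1‖) (h₂ : ‖p.2‖ ≤ ‖p.1‖) :
    ‖(henon a c p).1 - p.1 ^ 2‖ ≤ (‖a‖ + ‖c‖) * ‖p.1‖ := by
  have hfst : (henon a c p).1 - p.1 ^ 2 = c - a * p.2 := by simp only [henon]; ring
  rw [hfst]
  calc ‖c - a * p.2‖ ≤ ‖c‖ + ‖a‖ * ‖p.2‖ := (norm_sub_le _ _).trans_eq (by rw [norm_mul])
    _ ≤ (‖a‖ + ‖c‖) * ‖p.1‖ := by nlinarith [norm_nonneg a, norm_nonneg c]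

lemma abs_norm_henon_fst_sub_sq_le {p : ℂ × ℂ} (hp : p ∈ henonEscapeRegion a c) :
    |‖(henon a c p).1‖ - ‖p.1‖ ^ 2| ≤ (‖a‖ + ‖c‖) * ‖p.1‖ := by
  have h₁ : 1 ≤ ‖p.1‖ := by linarith [hp.1, norm_nonneg a, norm_nonneg c]
  rw [← norm_pow]
  exact (abs_norm_sub_norm_le _ _).trans (norm_henon_fst_sub_sq_le h₁ hp.2)

lemma norm_fst_le_norm_henon_fst {p : ℂ × ℂ} (hp : p ∈ henonEscapeRegion a c) :
    ‖p.1‖ ≤ ‖(henon a c p).1‖ := by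
  have h := (abs_le.mp (abs_norm_henon_fst_sub_sq_le hp)).1
  nlinarith [hp.1, norm_nonneg a, norm_nonneg c]

lemma mapsTo_henon_escapeRegion :
    MapsTo (henon a c) (henonEscapeRegion a c) (henonEscapeRegion a c) := fun _ hp =>
  ⟨hp.1.trans (norm_fst_le_norm_henon_fst hp), norm_fst_le_norm_henon_fst hp⟩

lemma norm_fst_le_norm_iterate_fst {p : ℂ × ℂ} (hp : p ∈ henonEscapeRegion a c) (n : ℕ) :
    ‖p.1‖ ≤ ‖((henon a c)^[n] p).1‖ := by
  induction n with
  | zero => rfl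
  | succ n ih =>
    rw [Function.iterate_succ_apply']
    exact ih.trans (norm_fst_le_norm_henon_fst (mapsTo_henon_escapeRegion.iterate n hp))

lemma abs_log_norm_henon_fst_sub_le {p : ℂ × ℂ} (hp : p ∈ henonEscapeRegion a c) :
    |log ‖(henon a c p).1‖ - 2 * log ‖p.1‖| ≤ 2 * (‖a‖ + ‖c‖) / ‖p.1‖ :=
  abs_log_sub_two_mul_log_le (by linarith [hp.1, norm_nonneg a, norm_nonneg c])
    (by linarith [hp.1]) (abs_norm_henon_fst_sub_sq_le hp)

lemma dist_log_norm_iterate_fst_le {p : ℂ × ℂ} (hp : p ∈ henonEscapeRegion a c) (n : ℕ) :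
    dist (log ‖((henon a c)^[n] p).1‖ / 2 ^ n)
        (log ‖((henon a c)^[n + 1] p).1‖ / 2 ^ (n + 1))
      ≤ (‖a‖ + ‖c‖) / ‖p.1‖ * (1 / 2) ^ n := by
  rw [Function.iterate_succ_apply', Real.dist_eq, abs_sub_comm]
  set q := (henon a c)^[n] p
  have hq : q ∈ henonEscapeRegion a c := mapsTo_henon_escapeRegion.iterate n hp
  have hp₀ : 0 < ‖p.1‖ := by linarith [hp.1, norm_nonneg a, norm_nonneg c]
  have hstep : |log ‖(henon a c q).1‖ - 2 * log ‖q.1‖| ≤ 2 * (‖a‖ + ‖c‖) / ‖p.1‖ :=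
    (abs_log_norm_henon_fst_sub_le hq).trans
      (by gcongr; exact norm_fst_le_norm_iterate_fst hp n)
  calc |log ‖(henon a c q).1‖ / 2 ^ (n + 1) - log ‖q.1‖ / 2 ^ n|
      = |(log ‖(henon a c q).1‖ - 2 * log ‖q.1‖) / 2 ^ (n + 1)| := by
        rw [pow_succ]; congr 1; field_simp
    _ = |log ‖(henon a c q).1‖ - 2 * log ‖q.1‖| / 2 ^ (n + 1) := by
        rw [abs_div, abs_pow, abs_two]
    _ ≤ 2 * (‖a‖ + ‖c‖) / ‖p.1‖ / 2 ^ (n + 1) := by gcongr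
    _ = (‖a‖ + ‖c‖) / ‖p.1‖ * (1 / 2) ^ n := by rw [one_div_pow, pow_succ]; field_simp

lemma max_log_norm_iterate_eq {p : ℂ × ℂ} (hp : p ∈ henonEscapeRegion a c) (n : ℕ) :
    max (log ‖(henon a c)^[n] p‖) 0 = log ‖((henon a c)^[n] p).1‖ := by
  have hq := mapsTo_henon_escapeRegion.iterate n hp
  rw [Prod.norm_def, max_eq_left hq.2, max_eq_left]
  exact log_nonneg (by linarith [hq.1, norm_nonneg a, norm_nonneg c])

end Henon

theorem stmt_13_general (a c : ℂ) :
    ∃ R : ℝ, 0 < R ∧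
      (∀ p : ℂ × ℂ, R ≤ ‖p.1‖ → ‖p.2‖ ≤ ‖p.1‖ →
        ∃ g : ℝ, Filter.Tendsto
          (fun n : ℕ => max (Real.log ‖(henon a c)^[n] p‖) 0 / 2 ^ n)
          Filter.atTop (nhds g)) ∧
      (∀ ε : ℝ, 0 < ε → ∃ R' : ℝ, R ≤ R' ∧
        ∀ p : ℂ × ℂ, R' ≤ ‖p.1‖ → ‖p.2‖ ≤ ‖p.1‖ →
          ∀ g : ℝ, Filter.Tendsto
            (fun n : ℕ => max (Real.log ‖(henon a c)^[n] p‖) 0 / 2 ^ n)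
            Filter.atTop (nhds g) →
          |g - Real.log (‖p.1‖)| < ε) := by
  set A := ‖a‖ + ‖c‖
  have hA : 0 ≤ A := by positivity
  refine ⟨2 * A + 2, by positivity, fun p hx hy => ?_, fun ε hε => ?_⟩
  · simp_rw [max_log_norm_iterate_eq ⟨hx, hy⟩]
    exact cauchySeq_tendsto_of_complete
      (cauchySeq_of_le_geometric _ _ (by norm_num) (dist_log_norm_iterate_fst_le ⟨hx, hy⟩))
  refine ⟨max (2 * A + 2) (2 * A / ε + 1), le_max_left _ _, fun p hx hy g hg => ?_⟩
  have hp : p ∈ henonEscapeRegion a c := ⟨(le_max_left _ _).trans hx, hy⟩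
  have hx' : 2 * A / ε + 1 ≤ ‖p.1‖ := (le_max_right _ _).trans hx
  simp_rw [max_log_norm_iterate_eq hp] at hg
  have hdist := dist_le_of_le_geometric_of_tendsto₀ _ _ (by norm_num)
    (dist_log_norm_iterate_fst_le hp) hg
  simp only [Function.iterate_zero, id, pow_zero, div_one, Real.dist_eq] at hdist
  have hp₀ : 0 < ‖p.1‖ := by linarith [hp.1]
  have hlt : 2 * A < ε * ‖p.1‖ := by
    nlinarith [mul_le_mul_of_nonneg_left hx' hε.le, mul_div_cancel₀ (2 * A) hε.ne']
  calc |g - log ‖p.1‖| = |log ‖p.1‖ - g| := abs_sub_comm _ _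
    _ ≤ A / ‖p.1‖ / (1 - 1 / 2) := hdist
    _ = 2 * A / ‖p.1‖ := by ring
    _ < ε := by rwa [div_lt_iff₀ hp₀]

/-- On the region `V⁺_R = {(x,y) : |x| ≥ max(|y|, R)}` with `R` large
(depending on `|a|`, `|c|`), the limit `G⁺(x,y) = lim 2⁻ⁿ log⁺‖fⁿ(x,y)‖`
exists, and `G⁺(x,y) = log|x| + o(1)` as `|x| → ∞` in this region. -/
theorem stmt_13 (a c : ℂ) (ha : a ≠ 0) :
    ∃ R : ℝ, 0 < R ∧
      (∀ p : ℂ × ℂ, R ≤ ‖p.1‖ → ‖p.2‖ ≤ ‖p.1‖ →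
        ∃ g : ℝ, Filter.Tendsto
          (fun n : ℕ => max (Real.log ‖(henon a c)^[n] p‖) 0 / 2 ^ n)
          Filter.atTop (nhds g)) ∧
      (∀ ε : ℝ, 0 < ε → ∃ R' : ℝ, R ≤ R' ∧
        ∀ p : ℂ × ℂ, R' ≤ ‖p.1‖ → ‖p.2‖ ≤ ‖p.1‖ →
          ∀ g : ℝ, Filter.Tendsto
            (fun n : ℕ => max (Real.log ‖(henon a c)^[n] p‖) 0 / 2 ^ n)
            Filter.atTop (nhds g) →
          |g - Real.log (‖p.1‖)| < ε) :=
  stmt_13_general a c
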